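/- arXiv:0908.3267 — 6 statements merged into one kernel-verified Lean document; each statement's English description precedes it below -/
import Mathlib

section
/- Let A be a unital complex *-algebra, let H be a complex Hilbert space, let D be a dense ℂ-subspace of H, and let π be a representation of A on D. Let a ∈ A be selfadjoint (star a = a) and assume that neither i nor -i belongs to the spectrum of a in A. Then the densely defined operator T_a (domain D, acting as π a) is symmetric and essentially self-adjoint: its closure is a self-adjoint operator in H (equivalently, its adjoint is self-adjoint). -/
open scoped InnerProductSpace ComplexConjugate

section Aux

variable {H : Type*} [NormedAddCommGroup H] [InnerProductSpace ℂ H] [CompleteSpace H]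

private lemma inner_dense_zero {s : Set H} (hs : Dense s) {x : H}
    (h : ∀ v ∈ s, ⟪v, x⟫_ℂ = 0) : x = 0 := by
  have : ∀ v : H, ⟪v, x⟫_ℂ = 0 := by
    have hcont : Continuous fun v : H => ⟪v, x⟫_ℂ := continuous_id.inner continuous_const
    have := Continuous.ext_on hs hcont continuous_const h
    intro v; exact congrFun this v
  simpa [inner_self_eq_zero] using this x

private lemma norm_ineq (T : H →ₗ.[ℂ] H)
    (hsymm : ∀ x y : T.domain, ⟪T x, (y : H)⟫_ℂ = ⟪(x : H), T y⟫_ℂ) (u : T.domain) :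
    ‖(u : H)‖ ≤ ‖T u - Complex.I • (u : H)‖ ∧ ‖T u‖ ≤ ‖T u - Complex.I • (u : H)‖ := by
  have hreal : (starRingEnd ℂ) ⟪T u, (u : H)⟫_ℂ = ⟪T u, (u : H)⟫_ℂ := by
    rw [inner_conj_symm]; exact (hsymm u u).symm
  have him : (⟪T u, (u : H)⟫_ℂ).im = 0 := Complex.conj_eq_iff_im.mp hreal
  have hre : RCLike.re ⟪T u, Complex.I • (u : H)⟫_ℂ = 0 := by
    rw [inner_smul_right]
    simp [RCLike.re_to_complex, Complex.mul_re, him]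
  have hsq : ‖T u - Complex.I • (u : H)‖ ^ 2 = ‖T u‖ ^ 2 + ‖(u : H)‖ ^ 2 := by
    rw [@norm_sub_sq ℂ, hre]
    simp [norm_smul]
  constructor <;> nlinarith [norm_nonneg (T u - Complex.I • (u : H)), norm_nonneg (T u),
    norm_nonneg ((u : H))]

private theorem ess_selfadj (T : H →ₗ.[ℂ] H) (hd : Dense (T.domain : Set H))
    (hsymm : ∀ x y : T.domain, ⟪T x, (y : H)⟫_ℂ = ⟪(x : H), T y⟫_ℂ)
    (hplus : Dense {v : H | ∃ x : T.domain, T x + Complex.I • (x : H) = v})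
    (hminus : Dense {v : H | ∃ x : T.domain, T x - Complex.I • (x : H) = v}) :
    T.IsClosable ∧ IsSelfAdjoint T.closure := by
  classical
  -- limits along the closure of the graph
  have closed_graph_limit : ∀ (φ : H × H → ℂ), Continuous φ →
      (∀ u : T.domain, φ ((u : H), T u) = 0) →
      ∀ p ∈ T.graph.topologicalClosure, φ p = 0 := by
    intro φ hφ hgr p hp
    have hp' : p ∈ closure (T.graph : Set (H × H)) := by
      rwa [← Submodule.topologicalClosure_coe, SetLike.mem_coe]
    have hsub : closure (T.graph : Set (H × H)) ⊆ φ ⁻¹' {0} := by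
      apply closure_minimal _ (IsClosed.preimage hφ isClosed_singleton)
      rintro q hq
      rcases T.mem_graph_iff.mp hq with ⟨u, hu1, hu2⟩
      have : q = ((u : H), T u) := by
        cases q; simp_all
      simp [this, hgr u]
    exact hsub hp'
  have hcont1 : ∀ dv : T.domain,
      Continuous fun p : H × H => ⟪p.2, (dv : H)⟫_ℂ - ⟪p.1, T dv⟫_ℂ :=
    fun dv => (continuous_snd.inner continuous_const).sub
      (continuous_fst.inner continuous_const)
  have hzero1 : ∀ (dv u : T.domain),
      (fun p : H × H => ⟪p.2, (dv : H)⟫_ℂ - ⟪p.1, T dv⟫_ℂ) ((u : H), T u) = 0 :=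
    fun dv u => sub_eq_zero_of_eq (hsymm u dv)
  -- closability
  have hg : ∀ (x : H × H), x ∈ T.graph.topologicalClosure → x.fst = 0 → x.snd = 0 := by
    intro x hx h0
    apply inner_dense_zero hd
    intro v hv
    set dv : T.domain := ⟨v, hv⟩ with hdv
    have h1 := closed_graph_limit _ (hcont1 dv) (hzero1 dv) x hx
    have h2 : ⟪x.2, (dv : H)⟫_ℂ - ⟪x.1, T dv⟫_ℂ = 0 := h1
    rw [h0, inner_zero_left, sub_zero] at h2
    rw [← inner_conj_symm]
    show (starRingEnd ℂ) ⟪x.2, (dv : H)⟫_ℂ = 0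
    rw [h2, map_zero]
  have hcl : T.IsClosable :=
    ⟨T.graph.topologicalClosure.toLinearPMap,
      (T.graph.topologicalClosure.toLinearPMap_graph_eq hg).symm⟩
  set S := T.closure with hSdef
  have hgraphS : S.graph = T.graph.topologicalClosure :=
    (hcl.graph_closure_eq_closure_graph).symm
  have hTS : T ≤ S := T.le_closure
  have hdS : Dense (S.domain : Set H) := hd.mono hTS.1
  have hmemgr : ∀ x : S.domain, ((x : H), S x) ∈ T.graph.topologicalClosure := by
    intro x; rw [← hgraphS]; exact S.mem_graph x
  -- symmetry of S, in two steps
  have hS1 : ∀ (x : S.domain) (dv : T.domain), ⟪S x, (dv : H)⟫_ℂ = ⟪(x : H), T dv⟫_ℂ := by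
    intro x dv
    have h1 := closed_graph_limit _ (hcont1 dv) (hzero1 dv) _ (hmemgr x)
    have h2 : ⟪S x, (dv : H)⟫_ℂ - ⟪(x : H), T dv⟫_ℂ = 0 := h1
    exact sub_eq_zero.mp h2
  have hSsymm : ∀ x y : S.domain, ⟪S x, (y : H)⟫_ℂ = ⟪(x : H), S y⟫_ℂ := by
    intro x y
    have hcont2 : Continuous fun p : H × H => ⟪(x : H), p.2⟫_ℂ - ⟪S x, p.1⟫_ℂ :=
      (continuous_const.inner continuous_snd).sub (continuous_const.inner continuous_fst)
    have hzero2 : ∀ u : T.domain,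
        (fun p : H × H => ⟪(x : H), p.2⟫_ℂ - ⟪S x, p.1⟫_ℂ) ((u : H), T u) = 0 :=
      fun u => sub_eq_zero_of_eq (hS1 x u).symm
    have h1 := closed_graph_limit _ hcont2 hzero2 _ (hmemgr y)
    have h2 : ⟪(x : H), S y⟫_ℂ - ⟪S x, (y : H)⟫_ℂ = 0 := h1
    exact (sub_eq_zero.mp h2).symm
  -- surjectivity of S - i
  have hsurj : ∀ v : H, ∃ x : S.domain, S x - Complex.I • (x : H) = v := by
    intro v
    obtain ⟨dseq, hdseq, hdlim⟩ := mem_closure_iff_seq_limit.mp (hminus v)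
    choose u hu using hdseq
    have hukey : ∀ n m : ℕ, T (u n) - T (u m) - Complex.I • ((u n : H) - (u m : H))
        = dseq n - dseq m := by
      intro n m
      rw [← hu n, ← hu m, smul_sub]; abel
    have hbound : ∀ n m : ℕ, ‖(u n : H) - (u m : H)‖ ≤ ‖dseq n - dseq m‖ ∧
        ‖T (u n) - T (u m)‖ ≤ ‖dseq n - dseq m‖ := by
      intro n m
      have h1 := norm_ineq T hsymm (u n - u m)
      have he : ((u n - u m : T.domain) : H) = (u n : H) - (u m : H) := rfl
      rw [T.map_sub, he] at h1
      rw [← hukey n m]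
      exact ⟨h1.1, h1.2⟩
    have hdc : CauchySeq dseq := hdlim.cauchySeq
    have hcp : CauchySeq (fun n => ((u n : H))) := by
      rw [Metric.cauchySeq_iff] at hdc ⊢
      intro ε hε
      obtain ⟨N, hN⟩ := hdc ε hε
      refine ⟨N, fun m hm n hn => ?_⟩
      have := hN m hm n hn
      rw [dist_eq_norm] at this ⊢
      exact lt_of_le_of_lt (hbound m n).1 this
    have hcq : CauchySeq (fun n => T (u n)) := by
      rw [Metric.cauchySeq_iff] at hdc ⊢
      intro ε hε
      obtain ⟨N, hN⟩ := hdc ε hε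
      refine ⟨N, fun m hm n hn => ?_⟩
      have := hN m hm n hn
      rw [dist_eq_norm] at this ⊢
      exact lt_of_le_of_lt (hbound m n).2 this
    obtain ⟨x, hx⟩ := cauchySeq_tendsto_of_complete hcp
    obtain ⟨w, hw⟩ := cauchySeq_tendsto_of_complete hcq
    have hmemS : (x, w) ∈ S.graph := by
      rw [hgraphS, ← SetLike.mem_coe, Submodule.topologicalClosure_coe]
      refine mem_closure_of_tendsto (hx.prodMk_nhds hw) ?_
      filter_upwards with n
      exact T.mem_graph (u n)
    obtain ⟨xs, hxs1, hxs2⟩ := S.mem_graph_iff.mp hmemS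
    refine ⟨xs, ?_⟩
    have ht1 : Filter.Tendsto (fun n => T (u n) - Complex.I • ((u n : H)))
        Filter.atTop (nhds (w - Complex.I • x)) := hw.sub (hx.const_smul _)
    have ht2 : Filter.Tendsto (fun n => T (u n) - Complex.I • ((u n : H)))
        Filter.atTop (nhds v) := by
      have he : (fun n => T (u n) - Complex.I • ((u n : H))) = dseq := funext hu
      rw [he]; exact hdlim
    have := tendsto_nhds_unique ht1 ht2
    rw [hxs2, hxs1]; exact this
  -- S is self-adjoint
  have hfa : S.IsFormalAdjoint S := fun x y => hSsymm x y
  have hle1 : S ≤ S.adjoint := hfa.le_adjoint hdS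
  have hle2 : S.adjoint ≤ S := by
    have hkey : ∀ y : S.adjoint.domain, ∃ hy : (y : H) ∈ S.domain,
        S.adjoint y = S ⟨(y : H), hy⟩ := by
      intro y
      set z := S.adjoint y with hz
      obtain ⟨x, hxv⟩ := hsurj (z - Complex.I • (y : H))
      have hfa' : ∀ u : S.domain, ⟪z, (u : H)⟫_ℂ = ⟪(y : H), S u⟫_ℂ :=
        fun u => (S.adjoint_isFormalAdjoint hdS) y u
      have h3 : z - S x = Complex.I • ((y : H) - (x : H)) := by
        have h : S x = z - Complex.I • (y : H) + Complex.I • (x : H) := by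
          rw [← hxv]; abel
        rw [h, smul_sub]; abel
      have horth : ∀ u : S.domain, ⟪S u + Complex.I • (u : H), (y : H) - (x : H)⟫_ℂ = 0 := by
        intro u
        have h1 : ⟪S u, (y : H)⟫_ℂ = ⟪(u : H), z⟫_ℂ := by
          rw [← inner_conj_symm ((u : H)) z]
          rw [hfa' u, inner_conj_symm]
        have h2 : ⟪S u, (x : H)⟫_ℂ = ⟪(u : H), S x⟫_ℂ := hSsymm u x
        have h5 : ⟪(u : H), z⟫_ℂ - ⟪(u : H), S x⟫_ℂ
            = Complex.I * (⟪(u : H), (y : H)⟫_ℂ - ⟪(u : H), (x : H)⟫_ℂ) := by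
          rw [← inner_sub_right, ← inner_sub_right, h3, inner_smul_right]
        simp only [inner_add_left, inner_sub_right, inner_smul_left, Complex.conj_I, h1, h2]
        linear_combination h5
      have hyx : (y : H) = (x : H) := by
        have hzero : (y : H) - (x : H) = 0 := by
          apply inner_dense_zero hplus
          rintro v ⟨uv, rfl⟩
          have hmem : (uv : H) ∈ S.domain := hTS.1 uv.2
          have hval : T uv = S ⟨(uv : H), hmem⟩ := hTS.2 rfl
          have h := horth ⟨(uv : H), hmem⟩
          rw [← hval] at h
          exact h
        exact sub_eq_zero.mp hzero
      have hy : (y : H) ∈ S.domain := by rw [hyx]; exact x.2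
      refine ⟨hy, ?_⟩
      have hzx : z = S x := by
        have : z - S x = 0 := by rw [h3, hyx, sub_self, smul_zero]
        exact sub_eq_zero.mp this
      have hxx : (⟨(y : H), hy⟩ : S.domain) = x := Subtype.ext hyx
      show z = S ⟨(y : H), hy⟩
      rw [hzx, hxx]
    refine ⟨fun v hv => ?_, fun p q hpq => ?_⟩
    · obtain ⟨hy, _⟩ := hkey ⟨v, hv⟩; exact hy
    · obtain ⟨hy, hval⟩ := hkey p
      rw [hval]
      congr 1
      exact Subtype.ext hpq
  refine ⟨hcl, ?_⟩
  rw [LinearPMap.isSelfAdjoint_def]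
  exact le_antisymm hle2 hle1

end Aux

/-- If `a` is a selfadjoint element of a unital complex *-algebra whose spectrum
contains neither `i` nor `-i`, and `π` is a representation of `A` on a dense subspace `D` of a
Hilbert space `H`, then the densely defined operator `T_a` is symmetric and essentially
self-adjoint (its closure is self-adjoint). -/
theorem stmt0 {A : Type*} [Ring A] [Algebra ℂ A] [StarRing A] [StarModule ℂ A]
    {H : Type*} [NormedAddCommGroup H] [InnerProductSpace ℂ H] [CompleteSpace H]
    (D : Submodule ℂ H) (hD : Dense (D : Set H))
    (π : A →ₐ[ℂ] (D →ₗ[ℂ] D))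
    (hπ : ∀ (b : A) (x y : D),
      ⟪((π b x : D) : H), (y : H)⟫_ℂ = ⟪(x : H), ((π (star b) y : D) : H)⟫_ℂ)
    (a : A) (ha : star a = a)
    (hi : Complex.I ∉ spectrum ℂ a) (hmi : -Complex.I ∉ spectrum ℂ a)
    (T : H →ₗ.[ℂ] H) (hT : T = ⟨D, D.subtype.comp (π a)⟩) :
    (∀ x y : T.domain, ⟪T x, (y : H)⟫_ℂ = ⟪(x : H), T y⟫_ℂ) ∧
    T.IsClosable ∧ IsSelfAdjoint T.closure := by
  subst hT
  set T : H →ₗ.[ℂ] H := ⟨D, D.subtype.comp (π a)⟩ with hTdef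
  have happ : ∀ x : T.domain, T x = ((π a x : D) : H) := fun x => rfl
  have hsymm : ∀ x y : T.domain, ⟪T x, (y : H)⟫_ℂ = ⟪(x : H), T y⟫_ℂ := by
    intro x y
    rw [happ, happ]
    have := hπ a x y
    rwa [ha] at this
  -- solving (a ± i) x = d in D
  have main : ∀ (μ : ℂ), IsUnit (a + algebraMap ℂ A μ) →
      ∀ d : D, ∃ x : D, π a x + μ • x = d := by
    intro μ hu d
    obtain ⟨w, hw⟩ := hu
    refine ⟨π (↑w⁻¹) d, ?_⟩
    have h1 : π a (π (↑w⁻¹) d) = π (a * ↑w⁻¹) d := by rw [map_mul]; rfl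
    have h2 : μ • (π (↑w⁻¹) d) = π (algebraMap ℂ A μ * ↑w⁻¹) d := by
      rw [map_mul, Module.End.mul_apply, π.commutes μ, Module.algebraMap_end_apply]
    have h3 : π a (π (↑w⁻¹) d) + μ • π (↑w⁻¹) d
        = π ((a + algebraMap ℂ A μ) * ↑w⁻¹) d := by
      rw [h1, h2, add_mul, map_add, LinearMap.add_apply]
    rw [h3, ← hw, Units.mul_inv, map_one, Module.End.one_apply]
  have huI : IsUnit (a + algebraMap ℂ A Complex.I) := by
    rw [spectrum.notMem_iff] at hmi
    simpa [map_neg, sub_neg_eq_add] using hmi.neg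
  have humI : IsUnit (a + algebraMap ℂ A (-Complex.I)) := by
    rw [spectrum.notMem_iff] at hi
    simpa [sub_eq_add_neg, map_neg] using hi.neg
  have hplus : Dense {v : H | ∃ x : T.domain, T x + Complex.I • (x : H) = v} := by
    apply hD.mono
    intro v hv
    obtain ⟨x, hx⟩ := main Complex.I huI ⟨v, hv⟩
    refine ⟨x, ?_⟩
    have := congrArg (Subtype.val) hx
    push_cast at this
    rw [happ]
    exact this
  have hminus : Dense {v : H | ∃ x : T.domain, T x - Complex.I • (x : H) = v} := by
    apply hD.mono
    intro v hv
    obtain ⟨x, hx⟩ := main (-Complex.I) humI ⟨v, hv⟩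
    refine ⟨x, ?_⟩
    have := congrArg (Subtype.val) hx
    push_cast at this
    rw [happ]
    simpa [neg_smul, sub_eq_add_neg] using this
  obtain ⟨h1, h2⟩ := ess_selfadj T hD hsymm hplus hminus
  exact ⟨hsymm, h1, h2⟩
end

section
/- Let A be a unital complex *-algebra, let H be a complex inner product space over ℂ, H ≠ {0}, and let π be a representation of A in H. Let a, b ∈ A be selfadjoint elements with a*b = b*a, and assume neither i nor -i lies in the spectrum of a nor in the spectrum of b. Then π a + i·id and π b + i·id are bijective, and the Cayley transform operators C_a := (π a - i·id) ∘ (π a + i·id)⁻¹ and C_b := (π b - i·id) ∘ (π b + i·id)⁻¹ are bijective linear maps of H preserving the inner product (⟪C_a x, C_a y⟫ = ⟪x, y⟫ for all x, y ∈ H), and they commute: C_a ∘ C_b = C_b ∘ C_a. -/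
open scoped InnerProductSpace

lemma aux_unit_add {A : Type*} [Ring A] [Algebra ℂ A] (s : A)
    (h : -Complex.I ∉ spectrum ℂ s) : IsUnit (s + Complex.I • 1) := by
  have h1 := spectrum.notMem_iff.mp h
  rw [Algebra.algebraMap_eq_smul_one] at h1
  have : (-Complex.I) • (1 : A) - s = -(s + Complex.I • 1) := by
    simp [neg_smul]; abel
  rw [this, IsUnit.neg_iff] at h1
  exact h1

lemma aux_unit_sub {A : Type*} [Ring A] [Algebra ℂ A] (s : A)
    (h : Complex.I ∉ spectrum ℂ s) : IsUnit (s - Complex.I • 1) := by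
  have h1 := spectrum.notMem_iff.mp h
  rw [Algebra.algebraMap_eq_smul_one] at h1
  have : Complex.I • (1 : A) - s = -(s - Complex.I • 1) := by
    exact (neg_sub _ _).symm
  rw [this, IsUnit.neg_iff] at h1
  exact h1

lemma aux_star_sub {A : Type*} [Ring A] [Algebra ℂ A] [StarRing A] [StarModule ℂ A]
    (s : A) (hs : star s = s) : star (s - Complex.I • 1) = s + Complex.I • 1 := by
  simp [star_sub, star_smul, Complex.star_def, Complex.conj_I, hs, sub_neg_eq_add]

lemma aux_star_add {A : Type*} [Ring A] [Algebra ℂ A] [StarRing A] [StarModule ℂ A]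
    (s : A) (hs : star s = s) : star (s + Complex.I • 1) = s - Complex.I • 1 := by
  simp [star_add, star_smul, Complex.star_def, Complex.conj_I, hs, sub_eq_add_neg]

lemma aux_cayley {A : Type*} [Ring A] [Algebra ℂ A] [StarRing A] [StarModule ℂ A]
    {H : Type*} [NormedAddCommGroup H] [InnerProductSpace ℂ H]
    (π : A →ₐ[ℂ] (H →ₗ[ℂ] H))
    (s : A) (hs : star s = s)
    (hi : Complex.I ∉ spectrum ℂ s) (hmi : -Complex.I ∉ spectrum ℂ s)
    (C : H →ₗ[ℂ] H)
    (hC : C.comp (π s + Complex.I • (LinearMap.id : H →ₗ[ℂ] H))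
        = π s - Complex.I • (LinearMap.id : H →ₗ[ℂ] H)) :
    ∃ c : A, IsUnit c ∧ C = π c ∧ star c * c = 1 ∧
      (∀ t : A, Commute t s → Commute t (Complex.I • (1 : A)) → Commute t c) := by
  have hU := aux_unit_add s hmi
  have hV := aux_unit_sub s hi
  have hπu : π (s + Complex.I • 1) = π s + Complex.I • (LinearMap.id : H →ₗ[ℂ] H) := by
    rw [map_add, map_smul, map_one]; rfl
  have hπv : π (s - Complex.I • 1) = π s - Complex.I • (LinearMap.id : H →ₗ[ℂ] H) := by
    rw [map_sub, map_smul, map_one]; rfl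
  set c : A := (s - Complex.I • 1) * ↑hU.unit⁻¹ with hc
  have hmulinv : (s + Complex.I • 1) * ↑hU.unit⁻¹ = 1 := hU.mul_val_inv
  have hinvmul : (↑hU.unit⁻¹ : A) * (s + Complex.I • 1) = 1 := hU.val_inv_mul
  have h2 : C * π (s + Complex.I • 1) = π (s - Complex.I • 1) := by
    rw [Module.End.mul_eq_comp, hπu, hπv]; exact hC
  have key : C = π c := by
    calc C = C * π ((s + Complex.I • 1) * ↑hU.unit⁻¹) := by
            rw [hmulinv, map_one, mul_one]
    _ = (C * π (s + Complex.I • 1)) * π (↑hU.unit⁻¹ : A) := by rw [map_mul, mul_assoc]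
    _ = π (s - Complex.I • 1) * π (↑hU.unit⁻¹ : A) := by rw [h2]
    _ = π c := (map_mul π _ _).symm
  have c0 : Commute s (Complex.I • (1 : A)) := (Commute.one_right s).smul_right _
  have comm : Commute (s + Complex.I • 1) (s - Complex.I • 1) :=
    Commute.add_left ((Commute.refl s).sub_right c0)
      (c0.symm.sub_right (Commute.refl _))
  have c1 : star (↑hU.unit⁻¹ : A) * (s - Complex.I • 1) = 1 := by
    rw [← aux_star_add s hs, ← star_mul, hmulinv, star_one]
  have hstar : star c * c = 1 := by
    have e : star c * c
        = (star (↑hU.unit⁻¹ : A) * ((s + Complex.I • 1) * (s - Complex.I • 1)))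
          * (↑hU.unit⁻¹ : A) := by
      rw [hc, star_mul, aux_star_sub s hs]
      noncomm_ring
    rw [e, comm.eq, ← mul_assoc, mul_assoc (star (↑hU.unit⁻¹ : A)), ← mul_assoc,
      c1, one_mul, hmulinv]
  refine ⟨c, hV.mul hU.unit⁻¹.isUnit, key, hstar, ?_⟩
  intro t hts hti
  have htu : Commute t (s + Complex.I • 1) := hts.add_right hti
  have htv : Commute t (s - Complex.I • 1) := hts.sub_right hti
  have htui : Commute t (↑hU.unit⁻¹ : A) := by
    have : Commute t (↑hU.unit : A) := by rw [hU.unit_spec]; exact htu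
    exact this.units_inv_right
  exact htv.mul_right htui

/-- For commuting selfadjoint elements `a, b` whose spectra avoid `±i`, the
operators `π a + i·id` and `π b + i·id` are bijective, and the Cayley transform operators
`C_a = (π a - i·id) ∘ (π a + i·id)⁻¹`, `C_b = (π b - i·id) ∘ (π b + i·id)⁻¹` (characterized by
`C ∘ (π a + i·id) = π a - i·id`) are bijective, preserve the inner product, and commute. -/
theorem stmt2 {A : Type*} [Ring A] [Algebra ℂ A] [StarRing A] [StarModule ℂ A]
    {H : Type*} [NormedAddCommGroup H] [InnerProductSpace ℂ H] [Nontrivial H]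
    (π : A →ₐ[ℂ] (H →ₗ[ℂ] H))
    (hπ : ∀ (c : A) (x y : H), ⟪π c x, y⟫_ℂ = ⟪x, π (star c) y⟫_ℂ)
    (a b : A) (hsa : star a = a) (hsb : star b = b) (hab : a * b = b * a)
    (hia : Complex.I ∉ spectrum ℂ a) (hmia : -Complex.I ∉ spectrum ℂ a)
    (hib : Complex.I ∉ spectrum ℂ b) (hmib : -Complex.I ∉ spectrum ℂ b) :
    Function.Bijective (π a + Complex.I • (LinearMap.id : H →ₗ[ℂ] H)) ∧
    Function.Bijective (π b + Complex.I • (LinearMap.id : H →ₗ[ℂ] H)) ∧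
    ∀ Ca Cb : H →ₗ[ℂ] H,
      Ca.comp (π a + Complex.I • (LinearMap.id : H →ₗ[ℂ] H))
        = π a - Complex.I • (LinearMap.id : H →ₗ[ℂ] H) →
      Cb.comp (π b + Complex.I • (LinearMap.id : H →ₗ[ℂ] H))
        = π b - Complex.I • (LinearMap.id : H →ₗ[ℂ] H) →
      Function.Bijective Ca ∧ Function.Bijective Cb ∧
      (∀ x y : H, ⟪Ca x, Ca y⟫_ℂ = ⟪x, y⟫_ℂ) ∧
      (∀ x y : H, ⟪Cb x, Cb y⟫_ℂ = ⟪x, y⟫_ℂ) ∧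
      Ca.comp Cb = Cb.comp Ca := by
  have hπu : ∀ s : A, π (s + Complex.I • 1) = π s + Complex.I • (LinearMap.id : H →ₗ[ℂ] H) := by
    intro s; rw [map_add, map_smul, map_one]; rfl
  refine ⟨?_, ?_, ?_⟩
  · rw [← hπu a]
    exact Module.End.isUnit_iff (π (a + Complex.I • 1)) |>.mp ((aux_unit_add a hmia).map π)
  · rw [← hπu b]
    exact Module.End.isUnit_iff (π (b + Complex.I • 1)) |>.mp ((aux_unit_add b hmib).map π)
  intro Ca Cb hCa hCb
  obtain ⟨ca, hca_unit, hca_eq, hca_star, hca_comm⟩ := aux_cayley π a hsa hia hmia Ca hCa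
  obtain ⟨cb, hcb_unit, hcb_eq, hcb_star, hcb_comm⟩ := aux_cayley π b hsb hib hmib Cb hCb
  have inner_pres : ∀ (c : A), star c * c = 1 → ∀ x y : H, ⟪π c x, π c y⟫_ℂ = ⟪x, y⟫_ℂ := by
    intro c hc x y
    rw [hπ]
    congr 1
    rw [← Module.End.mul_apply, ← map_mul, hc, map_one, Module.End.one_apply]
  have c0a : Commute a (Complex.I • (1 : A)) := (Commute.one_right a).smul_right _
  have c0b : Commute b (Complex.I • (1 : A)) := (Commute.one_right b).smul_right _
  have hacb : Commute a cb := hcb_comm a hab c0a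
  have hicb : Commute (Complex.I • (1 : A)) cb := hcb_comm _ c0b.symm (Commute.refl _)
  have hcomm : Commute cb ca := hca_comm cb hacb.symm hicb.symm
  refine ⟨?_, ?_, ?_, ?_, ?_⟩
  · rw [hca_eq]; exact (Module.End.isUnit_iff _).mp (hca_unit.map π)
  · rw [hcb_eq]; exact (Module.End.isUnit_iff _).mp (hcb_unit.map π)
  · rw [hca_eq]; exact inner_pres ca hca_star
  · rw [hcb_eq]; exact inner_pres cb hcb_star
  · rw [hca_eq, hcb_eq, ← Module.End.mul_eq_comp, ← Module.End.mul_eq_comp,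
      ← map_mul, ← map_mul, hcomm.eq]
end

section
/- Let A be a unital complex *-algebra, let H be a complex Hilbert space, let D be a dense ℂ-subspace of H, and let π be a representation of A on D. Let a, b ∈ A be selfadjoint elements with a*b = b*a such that neither i nor -i lies in the spectrum of a nor in the spectrum of b, and put c := a + i·b. Then the densely defined operators T_a and T_b are essentially self-adjoint, T_c is closable, and the closure of T_c is the sum of the closure of T_a and i times the closure of T_b: the domain of the closure of T_c equals the intersection of the domains of the closures of T_a and T_b, and on this intersection (closure T_c) x = (closure T_a) x + i • (closure T_b) x. -/
/-!
On `D` the operators `T_a` and `T_b` are symmetric, and since `a ∓ i` are invertible in `A`, the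
operators `T_a ∓ i` map `D` onto `D`. By the symmetric estimate `|Im μ|‖x‖ ≤ ‖(T - μ) x‖`,
`π (a ∓ i)⁻¹` extend to bounded resolvents of `closure T_a` at `±i`, so that closure is
self-adjoint (and likewise for `b`).

As `a` and `b` commute, `⟪T_a x, T_b x⟫ = ⟪x, T_{ab} x⟫` is real, hence
`‖T_c x‖² = ‖T_a x‖² + ‖T_b x‖²` on `D`: a sequence along which `T_c` converges is Cauchy for
`T_a` and `T_b`, giving closability and `closure T_c ⊆ closure T_a + i closure T_b`.
Conversely, the bounded extension of `π ((a - i)⁻¹ (b - i)⁻¹)` maps `H` into the domain of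
`closure T_c`, and this range contains `M x` for every `x` in both domains and every
`M = -(ti)(closure T_b - ti)⁻¹`, which commutes with `closure T_a`. As `t → ∞`, `M x → x`,
`closure T_a (M x) → closure T_a x` and `closure T_b (M x) → closure T_b x`, and closedness of
`closure T_c` finishes the proof.
-/

open Filter Topology Complex
open scoped InnerProductSpace ComplexConjugate LinearPMap Ring

section Graph

variable {𝕜 E F : Type*} [NormedField 𝕜] [NormedAddCommGroup E] [NormedSpace 𝕜 E]
  [NormedAddCommGroup F] [NormedSpace 𝕜 F]

theorem LinearPMap.IsClosable.mem_closure_graph_iff {T : E →ₗ.[𝕜] F} (hT : T.IsClosable)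
    {x : E} {y : F} :
    (x, y) ∈ T.graph.topologicalClosure ↔ ∃ hx : x ∈ T.closure.domain, T.closure ⟨x, hx⟩ = y := by
  rw [hT.graph_closure_eq_closure_graph, mem_graph_iff]
  constructor
  · rintro ⟨z, rfl, rfl⟩
    exact ⟨z.2, rfl⟩
  · rintro ⟨hx, rfl⟩
    exact ⟨⟨x, hx⟩, rfl, rfl⟩

theorem LinearPMap.IsClosable.eq_zero_of_mem_closure_graph {T : E →ₗ.[𝕜] F} (hT : T.IsClosable)
    {y : F} (h : ((0 : E), y) ∈ T.graph.topologicalClosure) : y = 0 := by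
  obtain ⟨h0, rfl⟩ := hT.mem_closure_graph_iff.1 h
  exact T.closure.map_zero

theorem LinearPMap.IsClosed.exists_apply_eq_of_tendsto {T : E →ₗ.[𝕜] F} (hT : T.IsClosed)
    {ι : Type*} {l : Filter ι} [l.NeBot] {u : ι → T.domain} {x : E} {y : F}
    (hux : Tendsto (fun n => (u n : E)) l (𝓝 x)) (huy : Tendsto (fun n => T (u n)) l (𝓝 y)) :
    ∃ hx : x ∈ T.domain, T ⟨x, hx⟩ = y := by
  obtain ⟨z, hzx, hzy⟩ := T.mem_graph_iff.1 <|
    hT.mem_of_tendsto (hux.prodMk_nhds huy) (Eventually.of_forall fun n => T.mem_graph (u n))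
  subst hzx
  exact ⟨z.2, hzy⟩

theorem LinearMap.cauchySeq_comp_of_norm_le {M : Type*} [AddCommGroup M] [Module 𝕜 M]
    {φ ψ : M →ₗ[𝕜] F} (h : ∀ z, ‖φ z‖ ≤ ‖ψ z‖) {e : ℕ → M} (he : CauchySeq (ψ ∘ e)) :
    CauchySeq (φ ∘ e) := by
  rw [Metric.cauchySeq_iff] at he ⊢
  intro ε hε
  obtain ⟨N, hN⟩ := he ε hε
  refine ⟨N, fun m hm n hn => lt_of_le_of_lt ?_ (hN m hm n hn)⟩
  simpa only [Function.comp_apply, dist_eq_norm, map_sub] using h (e m - e n)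

variable [CompleteSpace F] {p : Submodule 𝕜 E} {f g : p →ₗ[𝕜] F} {c : 𝕜}

theorem LinearPMap.exists_mem_closure_graph_of_norm_le (hf : ∀ x, ‖f x‖ ≤ ‖(f + c • g) x‖)
    (hg : ∀ x, ‖g x‖ ≤ ‖(f + c • g) x‖) {x : E} {y : F}
    (hxy : (x, y) ∈ (⟨p, f + c • g⟩ : E →ₗ.[𝕜] F).graph.topologicalClosure) :
    ∃ y₁ y₂ : F, (x, y₁) ∈ (⟨p, f⟩ : E →ₗ.[𝕜] F).graph.topologicalClosure ∧
      (x, y₂) ∈ (⟨p, g⟩ : E →ₗ.[𝕜] F).graph.topologicalClosure ∧ y = y₁ + c • y₂ := by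
  simp only [← SetLike.mem_coe, Submodule.topologicalClosure_coe] at hxy ⊢
  obtain ⟨u, hu, hlim⟩ := mem_closure_iff_seq_limit.mp hxy
  choose e he₁ he₂ using fun n => (mem_graph_iff _).1 (hu n)
  have hex : Tendsto (fun n => (e n : E)) atTop (𝓝 x) :=
    (continuous_fst.tendsto _).comp hlim |>.congr fun n => (he₁ n).symm
  have hey : Tendsto ((f + c • g) ∘ e) atTop (𝓝 y) :=
    (continuous_snd.tendsto _).comp hlim |>.congr fun n => (he₂ n).symm
  obtain ⟨y₁, hy₁⟩ := cauchySeq_tendsto_of_complete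
    (LinearMap.cauchySeq_comp_of_norm_le hf hey.cauchySeq)
  obtain ⟨y₂, hy₂⟩ := cauchySeq_tendsto_of_complete
    (LinearMap.cauchySeq_comp_of_norm_le hg hey.cauchySeq)
  refine ⟨y₁, y₂, ?_, ?_, tendsto_nhds_unique hey (hy₁.add (hy₂.const_smul c))⟩
  · exact mem_closure_of_tendsto (hex.prodMk_nhds hy₁)
      (Eventually.of_forall fun n => (⟨p, f⟩ : E →ₗ.[𝕜] F).mem_graph (e n))
  · exact mem_closure_of_tendsto (hex.prodMk_nhds hy₂)
      (Eventually.of_forall fun n => (⟨p, g⟩ : E →ₗ.[𝕜] F).mem_graph (e n))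

theorem LinearPMap.isClosable_add_smul (hf : ∀ x, ‖f x‖ ≤ ‖(f + c • g) x‖)
    (hg : ∀ x, ‖g x‖ ≤ ‖(f + c • g) x‖) (hcf : (⟨p, f⟩ : E →ₗ.[𝕜] F).IsClosable)
    (hcg : (⟨p, g⟩ : E →ₗ.[𝕜] F).IsClosable) : (⟨p, f + c • g⟩ : E →ₗ.[𝕜] F).IsClosable := by
  refine ⟨_, (Submodule.toLinearPMap_graph_eq _ fun q hq hq₁ => ?_).symm⟩
  rw [← Prod.mk.eta (p := q), hq₁] at hq
  obtain ⟨y₁, y₂, h₁, h₂, hq₂⟩ := exists_mem_closure_graph_of_norm_le hf hg hq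
  rw [hq₂, hcf.eq_zero_of_mem_closure_graph h₁, hcg.eq_zero_of_mem_closure_graph h₂, smul_zero,
    add_zero]

theorem LinearPMap.closure_add_smul_apply (hf : ∀ x, ‖f x‖ ≤ ‖(f + c • g) x‖)
    (hg : ∀ x, ‖g x‖ ≤ ‖(f + c • g) x‖) (hcf : (⟨p, f⟩ : E →ₗ.[𝕜] F).IsClosable)
    (hcg : (⟨p, g⟩ : E →ₗ.[𝕜] F).IsClosable)
    (x : (⟨p, f + c • g⟩ : E →ₗ.[𝕜] F).closure.domain) :
    ∃ (h₁ : (x : E) ∈ (⟨p, f⟩ : E →ₗ.[𝕜] F).closure.domain)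
      (h₂ : (x : E) ∈ (⟨p, g⟩ : E →ₗ.[𝕜] F).closure.domain),
      (⟨p, f + c • g⟩ : E →ₗ.[𝕜] F).closure x =
        (⟨p, f⟩ : E →ₗ.[𝕜] F).closure ⟨x, h₁⟩ + c • (⟨p, g⟩ : E →ₗ.[𝕜] F).closure ⟨x, h₂⟩ := by
  obtain ⟨y₁, y₂, h₁, h₂, hy⟩ := exists_mem_closure_graph_of_norm_le hf hg <|
    (isClosable_add_smul hf hg hcf hcg).mem_closure_graph_iff.2 ⟨x.2, rfl⟩
  obtain ⟨hx₁, rfl⟩ := hcf.mem_closure_graph_iff.1 h₁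
  obtain ⟨hx₂, rfl⟩ := hcg.mem_closure_graph_iff.1 h₂
  exact ⟨hx₁, hx₂, hy⟩

end Graph

theorem ContinuousLinearMap.tendsto_apply_of_dense {𝕜 E F : Type*} [NontriviallyNormedField 𝕜]
    [NormedAddCommGroup E] [NormedSpace 𝕜 E] [NormedAddCommGroup F] [NormedSpace 𝕜 F]
    {ι : Type*} {l : Filter ι} {M : ι → E →L[𝕜] F} (hM : ∃ C, ∀ i, ‖M i‖ ≤ C) {L : E →L[𝕜] F}
    {s : Set E} (hs : Dense s) (h : ∀ x ∈ s, Tendsto (fun i => M i x) l (𝓝 (L x))) (x : E) :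
    Tendsto (fun i => M i x) l (𝓝 (L x)) :=
  (Equicontinuous.isClosed_setOfPred_tendsto (((NormedSpace.equicontinuous_TFAE M).out 5 1).1 hM)
    L.continuous).closure_subset_iff.2 h (hs x)

section Symmetric

variable {H : Type*} [NormedAddCommGroup H] [InnerProductSpace ℂ H] {T : H →ₗ.[ℂ] H}

theorem LinearPMap.IsFormalAdjoint.im_inner_self_apply (hT : T.IsFormalAdjoint T)
    (x : T.domain) : (⟪(x : H), T x⟫_ℂ).im = 0 := by
  rw [← Complex.conj_eq_iff_im, inner_conj_symm]
  exact hT x x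

theorem LinearPMap.IsFormalAdjoint.abs_im_mul_norm_le (hT : T.IsFormalAdjoint T) (μ : ℂ)
    (x : T.domain) : |μ.im| * ‖(x : H)‖ ≤ ‖T x - μ • (x : H)‖ := by
  have him : (⟪(x : H), T x - μ • (x : H)⟫_ℂ).im = -(μ.im * ‖(x : H)‖ ^ 2) := by
    rw [inner_sub_right, inner_smul_right, inner_self_eq_norm_sq_to_K, Complex.sub_im,
      hT.im_inner_self_apply x]
    simp [← Complex.ofReal_pow]
  have hle : |μ.im| * ‖(x : H)‖ ^ 2 ≤ ‖(x : H)‖ * ‖T x - μ • (x : H)‖ := by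
    calc |μ.im| * ‖(x : H)‖ ^ 2 = |(⟪(x : H), T x - μ • (x : H)⟫_ℂ).im| := by
          rw [him, abs_neg, abs_mul, abs_of_nonneg (sq_nonneg ‖(x : H)‖)]
      _ ≤ ‖⟪(x : H), T x - μ • (x : H)⟫_ℂ‖ := Complex.abs_im_le_norm _
      _ ≤ ‖(x : H)‖ * ‖T x - μ • (x : H)‖ := norm_inner_le_norm _ _
  rcases (norm_nonneg (x : H)).eq_or_lt with hx | hx
  · rw [← hx, mul_zero]
    positivity
  · nlinarith

theorem LinearPMap.IsFormalAdjoint.isClosable [CompleteSpace H] (hT : T.IsFormalAdjoint T)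
    (hd : Dense (T.domain : Set H)) : T.IsClosable :=
  (adjoint_isClosed hd).isClosable.leIsClosable (hT.le_adjoint hd)

theorem LinearPMap.IsFormalAdjoint.closure (hT : T.IsFormalAdjoint T) (hc : T.IsClosable) :
    T.closure.IsFormalAdjoint T.closure := by
  intro x y
  have hsub : (T.graph : Set (H × H)) ×ˢ (T.graph : Set (H × H)) ⊆
      {q | ⟪q.1.2, q.2.1⟫_ℂ = ⟪q.1.1, q.2.2⟫_ℂ} := by
    rintro ⟨⟨x₁, y₁⟩, ⟨x₂, y₂⟩⟩ ⟨hp, hq⟩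
    obtain ⟨u, rfl, rfl⟩ := T.mem_graph_iff.1 hp
    obtain ⟨v, rfl, rfl⟩ := T.mem_graph_iff.1 hq
    exact hT u v
  have hmem : ∀ z : T.closure.domain,
      ((z : H), T.closure z) ∈ _root_.closure (T.graph : Set (H × H)) :=
    fun z => Submodule.topologicalClosure_coe T.graph ▸ hc.mem_closure_graph_iff.2 ⟨z.2, rfl⟩
  have hxy : (((x : H), T.closure x), ((y : H), T.closure y)) ∈
      _root_.closure ((T.graph : Set (H × H)) ×ˢ (T.graph : Set (H × H))) := by
    rw [closure_prod_eq]
    exact ⟨hmem x, hmem y⟩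
  exact closure_minimal hsub (isClosed_eq (by fun_prop) (by fun_prop)) hxy

end Symmetric

section Resolvent

variable {H : Type*} [NormedAddCommGroup H] [InnerProductSpace ℂ H]
  {S Sa Sb T : H →ₗ.[ℂ] H} {μ ν : ℂ} {R Ra Rb B : H →L[ℂ] H}

def LinearPMap.IsResolvent (S : H →ₗ.[ℂ] H) (μ : ℂ) (R : H →L[ℂ] H) : Prop :=
  ∀ h, ∃ hR : R h ∈ S.domain, S ⟨R h, hR⟩ = h + μ • R h

def ContinuousLinearMap.CommutesWith (B : H →L[ℂ] H) (S : H →ₗ.[ℂ] H) : Prop :=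
  ∀ x : S.domain, ∃ hB : B x ∈ S.domain, S ⟨B x, hB⟩ = B (S x)

theorem LinearPMap.IsResolvent.norm_apply_le (hS : S.IsFormalAdjoint S) (hR : S.IsResolvent μ R)
    (h : H) :
    |μ.im| * ‖R h‖ ≤ ‖h‖ := by
  obtain ⟨hm, hv⟩ := hR h
  simpa [hv] using hS.abs_im_mul_norm_le μ ⟨R h, hm⟩

theorem LinearPMap.IsResolvent.opNorm_le (hS : S.IsFormalAdjoint S) (hμ : μ.im ≠ 0)
    (hR : S.IsResolvent μ R) :
    ‖R‖ ≤ |μ.im|⁻¹ :=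
  R.opNorm_le_bound (by positivity) fun h => by
    rw [inv_mul_eq_div, le_div_iff₀' (abs_pos.2 hμ)]
    exact hR.norm_apply_le hS h

theorem LinearPMap.IsResolvent.apply_sub (hS : S.IsFormalAdjoint S) (hμ : μ.im ≠ 0)
    (hR : S.IsResolvent μ R) (x : S.domain) : R (S x - μ • (x : H)) = x := by
  obtain ⟨hm, hv⟩ := hR (S x - μ • (x : H))
  set y : S.domain := ⟨R (S x - μ • (x : H)), hm⟩
  have hzero : S (y - x) - μ • ((y - x : S.domain) : H) = 0 := by
    rw [S.map_sub, hv, Submodule.coe_sub]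
    module
  have := hS.abs_im_mul_norm_le μ (y - x)
  rw [hzero, norm_zero] at this
  have hyx : ((y - x : S.domain) : H) = 0 :=
    norm_eq_zero.1 (le_antisymm (nonpos_of_mul_nonpos_right this (abs_pos.2 hμ)) (norm_nonneg _))
  exact sub_eq_zero.1 (by rwa [Submodule.coe_sub] at hyx)

theorem LinearPMap.IsResolvent.exists_apply_apply_eq (hSa : Sa.IsFormalAdjoint Sa)
    (hμ : μ.im ≠ 0) (hRa : Sa.IsResolvent μ Ra) (hSb : Sb.IsFormalAdjoint Sb) (hν : ν.im ≠ 0)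
    (hRb : Sb.IsResolvent ν Rb) (x : Sa.domain) (hx : Sa x - μ • (x : H) ∈ Sb.domain) :
    ∃ k, Ra (Rb k) = x := by
  refine ⟨Sb ⟨_, hx⟩ - ν • (Sa x - μ • (x : H)), ?_⟩
  rw [hRb.apply_sub hSb hν ⟨_, hx⟩, hRa.apply_sub hSa hμ x]

theorem LinearPMap.IsResolvent.commutesWith_of_commute (hS : S.IsFormalAdjoint S)
    (hμ : μ.im ≠ 0) (hR : S.IsResolvent μ R) (hB : Commute B R) : B.CommutesWith S := by
  intro x
  have hBx : B x = R (B (S x - μ • (x : H))) := by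
    rw [← mul_apply_eq_comp, ← hB.eq, mul_apply_eq_comp, hR.apply_sub hS hμ x]
  obtain ⟨hm, hv⟩ := hR (B (S x - μ • (x : H)))
  refine ⟨hBx ▸ hm, ?_⟩
  rw [congrArg S (Subtype.ext hBx : (⟨B x, hBx ▸ hm⟩ : S.domain) = ⟨_, hm⟩), hv, ← hBx,
    ContinuousLinearMap.map_sub, ContinuousLinearMap.map_smul, sub_add_cancel]

theorem ContinuousLinearMap.CommutesWith.commute_of_isResolvent (hB : B.CommutesWith S)
    (hS : S.IsFormalAdjoint S) (hμ : μ.im ≠ 0) (hR : S.IsResolvent μ R) : Commute B R := by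
  refine ContinuousLinearMap.ext fun h => ?_
  rw [mul_apply_eq_comp, mul_apply_eq_comp]
  obtain ⟨hm, hv⟩ := hR h
  obtain ⟨hBm, hBv⟩ := hB ⟨R h, hm⟩
  have := hR.apply_sub hS hμ ⟨B (R h), hBm⟩
  simp only [hBv, hv, map_add, map_smul, add_sub_cancel_right] at this
  exact this.symm

variable [CompleteSpace H]

theorem LinearPMap.IsResolvent.exists_of_norm_sub_mul_lt_one (hR : S.IsResolvent μ R) {ν : ℂ}
    (hν : ‖ν - μ‖ * ‖R‖ < 1) : ∃ R' : H →L[ℂ] H, S.IsResolvent ν R' := by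
  set u := Units.oneSub ((ν - μ) • R) (by rwa [norm_smul])
  refine ⟨R * ↑u⁻¹, fun h => ?_⟩
  set v := (↑u⁻¹ : H →L[ℂ] H) h
  have hv : v - (ν - μ) • R v = h := by
    simpa [u, v] using congr($(u.mul_inv) h)
  obtain ⟨hm, hS⟩ := hR v
  refine ⟨hm, hS.trans ?_⟩
  calc v + μ • R v = (v - (ν - μ) • R v) + ν • R v := by module
    _ = h + ν • R v := by rw [hv]

theorem LinearPMap.IsResolvent.exists_ofReal_mul_I (hS : S.IsFormalAdjoint S)
    (hR : S.IsResolvent I R) {t : ℝ} (ht : 0 < t) :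
    ∃ R' : H →L[ℂ] H, S.IsResolvent (t * I) R' := by
  have step : ∀ {s : ℝ} {Rs : H →L[ℂ] H}, 0 < s → S.IsResolvent (s * I) Rs →
      ∀ t : ℝ, 0 < t → t < 2 * s → ∃ R' : H →L[ℂ] H, S.IsResolvent (t * I) R' := by
    intro s Rs hs hRs t ht hts
    refine hRs.exists_of_norm_sub_mul_lt_one ?_
    have hn : ‖(t : ℂ) * I - s * I‖ = |t - s| := by
      rw [← sub_mul, norm_mul, norm_I, mul_one, ← ofReal_sub, norm_real, Real.norm_eq_abs]
    have hRs' := hRs.opNorm_le hS (by simp [hs.ne'])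
    simp only [mul_im, ofReal_re, I_im, mul_one, ofReal_im, I_re, mul_zero, add_zero,
      abs_of_pos hs] at hRs'
    calc ‖(t : ℂ) * I - s * I‖ * ‖Rs‖ ≤ |t - s| * s⁻¹ := by
          rw [hn]; gcongr
      _ < 1 := by
          rw [← div_eq_mul_inv, div_lt_one hs, abs_lt]
          constructor <;> linarith
  have hpow : ∀ n : ℕ, ∃ R' : H →L[ℂ] H, S.IsResolvent (((3 / 2 : ℝ) ^ n : ℝ) * I) R' := by
    intro n
    induction n with
    | zero => exact ⟨R, by simpa using hR⟩
    | succ n ih =>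
      obtain ⟨R', hR'⟩ := ih
      have : (0 : ℝ) < (3 / 2) ^ n := by positivity
      exact step this hR' _ (by positivity) (by rw [pow_succ]; linarith)
  obtain ⟨n, hn⟩ := pow_unbounded_of_one_lt t (by norm_num : (1 : ℝ) < 3 / 2)
  obtain ⟨R', hR'⟩ := hpow n
  exact step (by positivity) hR' t ht (by linarith)

theorem LinearPMap.IsResolvent.eq_zero_of_adjoint_apply_eq (hd : Dense (S.domain : Set H))
    (hR : S.IsResolvent μ R) {z : S†.domain} (hz : S† z = conj μ • (z : H)) : (z : H) = 0 := by
  refine inner_self_eq_zero (𝕜 := ℂ).1 ?_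
  obtain ⟨hm, hv⟩ := hR z
  have h := adjoint_isFormalAdjoint hd z ⟨R z, hm⟩
  rw [hz, hv, inner_smul_left, conj_conj, inner_add_right, inner_smul_right] at h
  linear_combination -h

theorem LinearPMap.isSelfAdjoint_of_isResolvent (hS : S.IsFormalAdjoint S)
    (hd : Dense (S.domain : Set H)) {R R' : H →L[ℂ] H} (hR : S.IsResolvent I R)
    (hR' : S.IsResolvent (-I) R') : IsSelfAdjoint S := by
  have hle : S ≤ S† := hS.le_adjoint hd
  have hdom : S†.domain ≤ S.domain := by
    intro y hy
    obtain ⟨hm, hv⟩ := hR' (S† ⟨y, hy⟩ + I • y)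
    set x := R' (S† ⟨y, hy⟩ + I • y)
    have hx : S† ⟨x, hle.1 hm⟩ = S ⟨x, hm⟩ := (hle.2 rfl).symm
    have hz : S† (⟨y, hy⟩ - ⟨x, hle.1 hm⟩) = conj I • (y - x) := by
      rw [map_sub, hx, hv, conj_I]
      module
    have hyx := hR.eq_zero_of_adjoint_apply_eq hd hz
    rw [Submodule.coe_sub, sub_eq_zero] at hyx
    exact (show y = x from hyx) ▸ hm
  exact (eq_of_le_of_domain_eq hle (le_antisymm hle.1 hdom)).symm

theorem LinearPMap.IsResolvent.exists_approxIdentity (hS : S.IsFormalAdjoint S)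
    (hd : Dense (S.domain : Set H)) (hR : S.IsResolvent I R) :
    ∃ M : ℕ → H →L[ℂ] H, (∀ n h, M n h ∈ S.domain) ∧ (∀ n, (M n).CommutesWith S) ∧
      (∀ n (B : H →L[ℂ] H), B.CommutesWith S → Commute B (M n)) ∧
      ∀ h, Tendsto (fun n => M n h) atTop (𝓝 h) := by
  have ht : ∀ n : ℕ, (0 : ℝ) < n + 1 := fun n => by positivity
  choose Rn hRn using fun n : ℕ => hR.exists_ofReal_mul_I hS (ht n)
  have hμ : ∀ n : ℕ, (((n + 1 : ℝ) : ℂ) * I).im = n + 1 := fun n => by simp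
  have hμ₀ : ∀ n : ℕ, (((n + 1 : ℝ) : ℂ) * I).im ≠ 0 := fun n => (hμ n).trans_ne (ht n).ne'
  refine ⟨fun n => -(((n + 1 : ℝ) : ℂ) * I) • Rn n, fun n h => S.domain.smul_mem _ (hRn n h).1,
    fun n => (hRn n).commutesWith_of_commute hS (hμ₀ n) ((Commute.refl _).smul_left _),
    fun n B hB => (hB.commute_of_isResolvent hS (hμ₀ n) (hRn n)).smul_right _, ?_⟩
  refine ContinuousLinearMap.tendsto_apply_of_dense (L := ContinuousLinearMap.id ℂ H)
    ⟨1, fun n => ?_⟩ hd fun x hx => ?_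
  · have := (hRn n).opNorm_le hS (hμ₀ n)
    rw [hμ, abs_of_pos (ht n)] at this
    rw [norm_smul, norm_neg, norm_mul, norm_I, mul_one, norm_real, Real.norm_of_nonneg (ht n).le]
    calc (n + 1 : ℝ) * ‖Rn n‖ ≤ (n + 1) * (n + 1 : ℝ)⁻¹ := by gcongr
      _ = 1 := mul_inv_cancel₀ (ht n).ne'
  · have hsub : ∀ n : ℕ, (-(((n + 1 : ℝ) : ℂ) * I) • Rn n) x - x = -Rn n (S ⟨x, hx⟩) := by
      intro n
      have := (hRn n).apply_sub hS (hμ₀ n) ⟨x, hx⟩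
      rw [ContinuousLinearMap.map_sub, ContinuousLinearMap.map_smul] at this
      rw [_root_.smul_apply]
      linear_combination (norm := module) this
    rw [tendsto_iff_norm_sub_tendsto_zero]
    refine squeeze_zero (fun n => norm_nonneg _) (fun n => ?_)
      (by simpa using tendsto_one_div_add_atTop_nhds_zero_nat.const_mul ‖S ⟨x, hx⟩‖)
    have := (hRn n).norm_apply_le hS (S ⟨x, hx⟩)
    rw [hμ, abs_of_pos (ht n)] at this
    rw [ContinuousLinearMap.id_apply, hsub, norm_neg, ← div_eq_mul_inv, le_div_iff₀ (ht n),
      mul_comm]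
    exact this

theorem LinearPMap.inf_domain_le_of_isResolvent (hSa : Sa.IsFormalAdjoint Sa)
    (hSb : Sb.IsFormalAdjoint Sb) (hdb : Dense (Sb.domain : Set H)) (hRa : Sa.IsResolvent I Ra)
    (hRb : Sb.IsResolvent I Rb) (hcomm : Commute Ra Rb) (hT : T.IsClosed) {c : ℂ}
    (hTle : ∀ x : T.domain, ∃ (ha : (x : H) ∈ Sa.domain) (hb : (x : H) ∈ Sb.domain),
      T x = Sa ⟨x, ha⟩ + c • Sb ⟨x, hb⟩)
    (hrange : ∀ k, Ra (Rb k) ∈ T.domain) : Sa.domain ⊓ Sb.domain ≤ T.domain := by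
  have hI : I.im ≠ 0 := by simp
  rintro x ⟨ha, hb⟩
  obtain ⟨M, hMdom, hMSb, hMcomm, hMlim⟩ := hRb.exists_approxIdentity hSb hdb
  have hMSa : ∀ n, (M n).CommutesWith Sa := fun n =>
    hRa.commutesWith_of_commute hSa hI
      (hMcomm n Ra (hRb.commutesWith_of_commute hSb hI hcomm)).symm
  have hmem : ∀ n, M n x ∈ T.domain := fun n => by
    obtain ⟨ha', hva⟩ := hMSa n ⟨x, ha⟩
    obtain ⟨k, hk⟩ := hRa.exists_apply_apply_eq hSa hI hSb hI hRb ⟨M n x, ha'⟩ <| by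
      rw [hva, ← ContinuousLinearMap.map_smul, ← ContinuousLinearMap.map_sub]
      exact hMdom n _
    exact (show Ra (Rb k) = M n x from hk) ▸ hrange k
  have hval : ∀ n, T ⟨M n x, hmem n⟩ = M n (Sa ⟨x, ha⟩ + c • Sb ⟨x, hb⟩) := fun n => by
    obtain ⟨ha', hb', hv⟩ := hTle ⟨M n x, hmem n⟩
    obtain ⟨_, hva⟩ := hMSa n ⟨x, ha⟩
    obtain ⟨_, hvb⟩ := hMSb n ⟨x, hb⟩
    rw [hv, ContinuousLinearMap.map_add, ContinuousLinearMap.map_smul, ← hva, ← hvb]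
  obtain ⟨hx, -⟩ := hT.exists_apply_eq_of_tendsto (u := fun n => ⟨M n x, hmem n⟩) (hMlim x)
    ((tendsto_congr hval).2 (hMlim _))
  exact hx

end Resolvent

section Representation

variable {A : Type*} [Ring A] [Algebra ℂ A]
  {H : Type*} [NormedAddCommGroup H] [InnerProductSpace ℂ H] {D : Submodule ℂ H}

theorem isUnit_sub_algebraMap_of_notMem_spectrum {d : A} {μ : ℂ} (hσ : μ ∉ spectrum ℂ d) :
    IsUnit (d - algebraMap ℂ A μ) := by
  simpa using (spectrum.notMem_iff.1 hσ).neg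

theorem mul_ringInverse_sub_algebraMap {d : A} {μ : ℂ} (hu : IsUnit (d - algebraMap ℂ A μ)) :
    d * (d - algebraMap ℂ A μ)⁻¹ʳ = 1 + μ • (d - algebraMap ℂ A μ)⁻¹ʳ := by
  rw [Algebra.smul_def, ← Ring.mul_inverse_cancel _ hu, ← add_mul, sub_add_cancel]

theorem Commute.ringInverse_sub_algebraMap {a b : A} (hab : Commute a b) (μ ν : ℂ) :
    Commute (a - algebraMap ℂ A μ)⁻¹ʳ (b - algebraMap ℂ A ν)⁻¹ʳ :=
  ((hab.sub_right (Algebra.commute_algebraMap_right _ _)).sub_left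
    (Algebra.commute_algebraMap_left _ _)).ringInverse_ringInverse

def repOp (π : A →ₐ[ℂ] (D →ₗ[ℂ] D)) (d : A) : H →ₗ.[ℂ] H :=
  ⟨D, D.subtype.comp (π d)⟩

variable {π : A →ₐ[ℂ] (D →ₗ[ℂ] D)}

theorem repOp_add_smul (d e : A) (c : ℂ) :
    repOp π (d + c • e) = ⟨D, D.subtype.comp (π d) + c • D.subtype.comp (π e)⟩ := by
  rw [repOp, map_add, map_smul, LinearMap.comp_add, LinearMap.comp_smul]

theorem mem_closure_graph_repOp (hD : Dense (D : Set H)) {d e : A} {E E' : H →L[ℂ] H}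
    (hE : ∀ y : D, E y = π e y) (hE' : ∀ y : D, E' y = π (d * e) y) (k : H) :
    (E k, E' k) ∈ (repOp π d).graph.topologicalClosure := by
  rw [← SetLike.mem_coe, Submodule.topologicalClosure_coe]
  refine closure_mono ?_
    ((E.continuous.prodMk E'.continuous).range_subset_closure_image_dense hD ⟨k, rfl⟩)
  rintro _ ⟨y, hy, rfl⟩
  refine (repOp π d).mem_graph_iff.2 ⟨π e ⟨y, hy⟩, (hE ⟨y, hy⟩).symm, ?_⟩
  exact ((hE' ⟨y, hy⟩).trans (by rw [map_mul]; rfl)).symm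

theorem commute_of_apply_eq_repOp (hD : Dense (D : Set H)) {ra rb : A} (h : Commute ra rb)
    {RA RB : H →L[ℂ] H} (hRA : ∀ y : D, RA y = π ra y) (hRB : ∀ y : D, RB y = π rb y) :
    Commute RA RB := by
  refine ContinuousLinearMap.ext_on (s := D) (by rwa [Submodule.span_eq]) fun y hy => ?_
  lift y to D using hy
  simp only [mul_apply_eq_comp, hRA, hRB, ← Module.End.mul_apply, ← map_mul, h.eq]

variable [StarRing A]

def IsStarRep (π : A →ₐ[ℂ] (D →ₗ[ℂ] D)) : Prop :=
  ∀ (d : A) (x y : D), ⟪((π d x : D) : H), (y : H)⟫_ℂ = ⟪(x : H), ((π (star d) y : D) : H)⟫_ℂ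

theorem repOp_isFormalAdjoint (hπ : IsStarRep π) {d : A} (hd : star d = d) :
    (repOp π d).IsFormalAdjoint (repOp π d) := fun x y => by
  have h := hπ d x y
  rw [hd] at h
  exact h

variable {a b : A}

theorem IsStarRep.norm_add_I_smul_sq (hπ : IsStarRep π) (ha : star a = a) (hb : star b = b)
    (hab : Commute a b) (x : D) :
    ‖(π a x : H) + I • (π b x : H)‖ ^ 2 = ‖(π a x : H)‖ ^ 2 + ‖(π b x : H)‖ ^ 2 := by
  have hsym := repOp_isFormalAdjoint hπ (d := a * b) (by rw [star_mul, ha, hb, hab.eq])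
  have him : (⟪(π a x : H), (π b x : H)⟫_ℂ).im = 0 := by
    rw [hπ a x (π b x), ha, ← Module.End.mul_apply, ← map_mul]
    exact hsym.im_inner_self_apply x
  rw [@norm_add_sq ℂ, inner_smul_right, norm_smul, norm_I, one_mul]
  simp [him]

theorem IsStarRep.norm_le_norm_add_I_smul (hπ : IsStarRep π) (ha : star a = a)
    (hb : star b = b) (hab : Commute a b) :
    (∀ x, ‖D.subtype.comp (π a) x‖ ≤ ‖(D.subtype.comp (π a) + I • D.subtype.comp (π b)) x‖) ∧
      ∀ x, ‖D.subtype.comp (π b) x‖ ≤ ‖(D.subtype.comp (π a) + I • D.subtype.comp (π b)) x‖ := by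
  have h := hπ.norm_add_I_smul_sq ha hb hab
  refine ⟨fun x => ?_, fun x => ?_⟩ <;>
  · refine (pow_le_pow_iff_left₀ (norm_nonneg _) (norm_nonneg _) two_ne_zero).1 ?_
    simp only [LinearMap.add_apply, LinearMap.smul_apply, LinearMap.comp_apply,
      Submodule.subtype_apply, h x]
    nlinarith [sq_nonneg ‖(π a x : H)‖, sq_nonneg ‖(π b x : H)‖]

variable [CompleteSpace H]

theorem isClosable_repOp (hD : Dense (D : Set H)) (hπ : IsStarRep π) {d : A} (hd : star d = d) :
    (repOp π d).IsClosable :=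
  (repOp_isFormalAdjoint hπ hd).isClosable hD

theorem exists_isResolvent_closure_repOp (hD : Dense (D : Set H)) (hπ : IsStarRep π) {d : A}
    (hd : star d = d) {μ : ℂ} (hμ : μ.im ≠ 0) (hσ : μ ∉ spectrum ℂ d) :
    ∃ R : H →L[ℂ] H, (∀ y : D, R y = π (d - algebraMap ℂ A μ)⁻¹ʳ y) ∧
      (repOp π d).closure.IsResolvent μ R := by
  set r := (d - algebraMap ℂ A μ)⁻¹ʳ
  have hdr : d * r = 1 + μ • r :=
    mul_ringInverse_sub_algebraMap (isUnit_sub_algebraMap_of_notMem_spectrum hσ)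
  have hπdr : ∀ y : D, ((π d (π r y) : D) : H) = y + μ • (π r y : H) := fun y => by
    rw [← Module.End.mul_apply, ← map_mul, hdr]
    simp
  have hbound : ∀ y : D, ‖(π r y : H)‖ ≤ |μ.im|⁻¹ * ‖(y : H)‖ := fun y => by
    have h := (repOp_isFormalAdjoint hπ hd).abs_im_mul_norm_le μ (π r y)
    rw [show (repOp π d (π r y) : H) = _ from hπdr y, add_sub_cancel_right] at h
    rwa [inv_mul_eq_div, le_div_iff₀' (abs_pos.2 hμ)]
  set R := (D.subtype.comp (π r)).extendOfNorm D.subtype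
  have hR : ∀ y : D, R y = π r y := LinearMap.extendOfNorm_eq hD.denseRange_val ⟨_, hbound⟩
  refine ⟨R, hR, fun h => (isClosable_repOp hD hπ hd).mem_closure_graph_iff.1 ?_⟩
  refine mem_closure_graph_repOp hD (E' := ContinuousLinearMap.id ℂ H + μ • R) hR (fun y => ?_) h
  simp [hR, map_mul, hπdr]

theorem isClosable_repOp_add_I_smul (hD : Dense (D : Set H)) (hπ : IsStarRep π)
    (ha : star a = a) (hb : star b = b) (hab : Commute a b) :
    (repOp π (a + I • b)).IsClosable := by
  obtain ⟨hfa, hfb⟩ := hπ.norm_le_norm_add_I_smul ha hb hab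
  rw [repOp_add_smul]
  exact LinearPMap.isClosable_add_smul hfa hfb (isClosable_repOp hD hπ ha)
    (isClosable_repOp hD hπ hb)

theorem closure_repOp_add_I_smul_apply (hD : Dense (D : Set H)) (hπ : IsStarRep π)
    (ha : star a = a) (hb : star b = b) (hab : Commute a b)
    (x : (repOp π (a + I • b)).closure.domain) :
    ∃ (h₁ : (x : H) ∈ (repOp π a).closure.domain) (h₂ : (x : H) ∈ (repOp π b).closure.domain),
      (repOp π (a + I • b)).closure x =
        (repOp π a).closure ⟨x, h₁⟩ + I • (repOp π b).closure ⟨x, h₂⟩ := by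
  obtain ⟨hfa, hfb⟩ := hπ.norm_le_norm_add_I_smul ha hb hab
  revert x
  rw [repOp_add_smul]
  exact LinearPMap.closure_add_smul_apply hfa hfb (isClosable_repOp hD hπ ha)
    (isClosable_repOp hD hπ hb)

theorem apply_apply_mem_closure_repOp_add_I_smul_domain (hD : Dense (D : Set H))
    (hπ : IsStarRep π) (ha : star a = a) (hb : star b = b) (hab : Commute a b)
    (hia : I ∉ spectrum ℂ a) (hib : I ∉ spectrum ℂ b) {RA RB : H →L[ℂ] H}
    (hRA : ∀ y : D, RA y = π (a - algebraMap ℂ A I)⁻¹ʳ y)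
    (hRB : ∀ y : D, RB y = π (b - algebraMap ℂ A I)⁻¹ʳ y) (k : H) :
    RA (RB k) ∈ (repOp π (a + I • b)).closure.domain := by
  set ra := (a - algebraMap ℂ A I)⁻¹ʳ
  set rb := (b - algebraMap ℂ A I)⁻¹ʳ
  have hcomm : Commute ra rb := hab.ringInverse_sub_algebraMap I I
  have hra : a * ra = 1 + I • ra :=
    mul_ringInverse_sub_algebraMap (isUnit_sub_algebraMap_of_notMem_spectrum hia)
  have hrb : b * rb = 1 + I • rb :=
    mul_ringInverse_sub_algebraMap (isUnit_sub_algebraMap_of_notMem_spectrum hib)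
  have hc : (a + I • b) * (ra * rb) = rb + I • (ra * rb) + I • (ra + I • (rb * ra)) := by
    calc (a + I • b) * (ra * rb) = (a * ra) * rb + I • ((b * rb) * ra) := by
          rw [add_mul, smul_mul_assoc, ← mul_assoc a, hcomm.eq, ← mul_assoc b]
      _ = _ := by
          rw [hra, hrb]
          simp only [add_mul, one_mul, smul_mul_assoc]
  have hRARB : ∀ y : D, (RA * RB) y = π (ra * rb) y := fun y => by
    rw [mul_apply_eq_comp, hRB, hRA, map_mul, Module.End.mul_apply]
  have hmem := mem_closure_graph_repOp hD (d := a + I • b)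
    (E' := RB + I • (RA * RB) + I • (RA + I • (RB * RA))) hRARB (fun y => by
      simp only [hc, map_add, map_smul, map_mul, add_apply, smul_apply,
        mul_apply_eq_comp, hRA, hRB, Module.End.mul_apply, LinearMap.add_apply,
        LinearMap.smul_apply, Submodule.coe_add, Submodule.coe_smul]) k
  exact ((isClosable_repOp_add_I_smul hD hπ ha hb hab).mem_closure_graph_iff.1 hmem).1

end Representation

theorem stmt3_general {A : Type*} [Ring A] [Algebra ℂ A] [StarRing A]
    {H : Type*} [NormedAddCommGroup H] [InnerProductSpace ℂ H] [CompleteSpace H]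
    (D : Submodule ℂ H) (hD : Dense (D : Set H))
    (π : A →ₐ[ℂ] (D →ₗ[ℂ] D))
    (hπ : ∀ (d : A) (x y : D),
      ⟪((π d x : D) : H), (y : H)⟫_ℂ = ⟪(x : H), ((π (star d) y : D) : H)⟫_ℂ)
    (a b : A) (hsa : star a = a) (hsb : star b = b) (hab : a * b = b * a)
    (hia : Complex.I ∉ spectrum ℂ a) (hmia : -Complex.I ∉ spectrum ℂ a)
    (hib : Complex.I ∉ spectrum ℂ b) (hmib : -Complex.I ∉ spectrum ℂ b)
    (c : A) (hc : c = a + Complex.I • b)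
    (Ta Tb Tc : H →ₗ.[ℂ] H)
    (hTa : Ta = ⟨D, D.subtype.comp (π a)⟩)
    (hTb : Tb = ⟨D, D.subtype.comp (π b)⟩)
    (hTc : Tc = ⟨D, D.subtype.comp (π c)⟩) :
    (Ta.IsClosable ∧ IsSelfAdjoint Ta.closure) ∧
    (Tb.IsClosable ∧ IsSelfAdjoint Tb.closure) ∧
    Tc.IsClosable ∧
    Tc.closure.domain = Ta.closure.domain ⊓ Tb.closure.domain ∧
    ∀ (x : H) (hxc : x ∈ Tc.closure.domain) (hxa : x ∈ Ta.closure.domain)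
      (hxb : x ∈ Tb.closure.domain),
      Tc.closure ⟨x, hxc⟩ = Ta.closure ⟨x, hxa⟩ + Complex.I • Tb.closure ⟨x, hxb⟩ := by
  subst hc hTa hTb hTc
  have hI : I.im ≠ 0 := by simp
  have hI' : (-I).im ≠ 0 := by simp
  obtain ⟨RA, hRA, hA⟩ := exists_isResolvent_closure_repOp hD hπ hsa hI hia
  obtain ⟨RB, hRB, hB⟩ := exists_isResolvent_closure_repOp hD hπ hsb hI hib
  obtain ⟨RA', -, hA'⟩ := exists_isResolvent_closure_repOp hD hπ hsa hI' hmia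
  obtain ⟨RB', -, hB'⟩ := exists_isResolvent_closure_repOp hD hπ hsb hI' hmib
  have hsymA := (repOp_isFormalAdjoint hπ hsa).closure (isClosable_repOp hD hπ hsa)
  have hsymB := (repOp_isFormalAdjoint hπ hsb).closure (isClosable_repOp hD hπ hsb)
  have hdenseA := hD.mono (repOp π a).le_closure.1
  have hdenseB := hD.mono (repOp π b).le_closure.1
  have hclC := isClosable_repOp_add_I_smul hD hπ hsa hsb hab
  have hC := closure_repOp_add_I_smul_apply hD hπ hsa hsb hab
  have hCdom := LinearPMap.inf_domain_le_of_isResolvent hsymA hsymB hdenseB hA hB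
    (commute_of_apply_eq_repOp hD (Commute.ringInverse_sub_algebraMap hab I I) hRA hRB)
    hclC.closure_isClosed hC
    (apply_apply_mem_closure_repOp_add_I_smul_domain hD hπ hsa hsb hab hia hib hRA hRB)
  refine ⟨⟨isClosable_repOp hD hπ hsa,
      LinearPMap.isSelfAdjoint_of_isResolvent hsymA hdenseA hA hA'⟩,
    ⟨isClosable_repOp hD hπ hsb, LinearPMap.isSelfAdjoint_of_isResolvent hsymB hdenseB hB hB'⟩,
    hclC, le_antisymm (fun x hx => ?_) hCdom, fun x hxc _ _ => (hC ⟨x, hxc⟩).2.2⟩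
  obtain ⟨h₁, h₂, -⟩ := hC ⟨x, hx⟩
  exact ⟨h₁, h₂⟩

/-- For commuting selfadjoint `a, b` with spectra avoiding `±i` and
`c = a + i·b`, the operators `T_a`, `T_b` are essentially self-adjoint, `T_c` is closable,
and `closure T_c = closure T_a + i • closure T_b` (equality of domains and of values). -/
theorem stmt3 {A : Type*} [Ring A] [Algebra ℂ A] [StarRing A] [StarModule ℂ A]
    {H : Type*} [NormedAddCommGroup H] [InnerProductSpace ℂ H] [CompleteSpace H]
    (D : Submodule ℂ H) (hD : Dense (D : Set H))
    (π : A →ₐ[ℂ] (D →ₗ[ℂ] D))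
    (hπ : ∀ (d : A) (x y : D),
      ⟪((π d x : D) : H), (y : H)⟫_ℂ = ⟪(x : H), ((π (star d) y : D) : H)⟫_ℂ)
    (a b : A) (hsa : star a = a) (hsb : star b = b) (hab : a * b = b * a)
    (hia : Complex.I ∉ spectrum ℂ a) (hmia : -Complex.I ∉ spectrum ℂ a)
    (hib : Complex.I ∉ spectrum ℂ b) (hmib : -Complex.I ∉ spectrum ℂ b)
    (c : A) (hc : c = a + Complex.I • b)
    (Ta Tb Tc : H →ₗ.[ℂ] H)
    (hTa : Ta = ⟨D, D.subtype.comp (π a)⟩)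
    (hTb : Tb = ⟨D, D.subtype.comp (π b)⟩)
    (hTc : Tc = ⟨D, D.subtype.comp (π c)⟩) :
    (Ta.IsClosable ∧ IsSelfAdjoint Ta.closure) ∧
    (Tb.IsClosable ∧ IsSelfAdjoint Tb.closure) ∧
    Tc.IsClosable ∧
    Tc.closure.domain = Ta.closure.domain ⊓ Tb.closure.domain ∧
    ∀ (x : H) (hxc : x ∈ Tc.closure.domain) (hxa : x ∈ Ta.closure.domain)
      (hxb : x ∈ Tb.closure.domain),
      Tc.closure ⟨x, hxc⟩ = Ta.closure ⟨x, hxa⟩ + Complex.I • Tb.closure ⟨x, hxb⟩ :=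
  stmt3_general D hD π hπ a b hsa hsb hab hia hmia hib hmib c hc Ta Tb Tc hTa hTb hTc
end

section
/- Let A be a unital complex algebra and let a ∈ A be such that neither i nor -i belongs to the spectrum of a, and let g := (a - i·1) * (a + i·1)⁻¹ be its Cayley transform. Then the spectrum of a is contained in ℝ (every z ∈ spectrum ℂ a has z.im = 0) if and only if the spectrum of g is contained in the unit circle (every z ∈ spectrum ℂ g has |z| = 1). -/
/-! The Cayley transform is the Möbius map `z ↦ (z - i) / (z + i)` applied to `a`. For such maps the
spectral mapping theorem is purely algebraic: with `λ = (z - p) / (z - q)` one has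
`λ - (a - p)(a - q)⁻¹ = ((p - q) / (z - q)) • (z - a) * (a - q)⁻¹`, so `λ` is in the spectrum of
the transform iff `z` is in that of `a`, and `1` is never in it. Since `z ↦ (z - i) / (z + i)` maps
`ℂ \ {-i}` onto `ℂ \ {1}` and sends `z` to the unit circle iff `z` is real, the two conditions
agree. -/

section
variable {R : Type*} [Ring R] {b : R}

lemma Ring.sub_mul_inverse_eq (hb : IsUnit b) (r x : R) :
    r - x * Ring.inverse b = (r * b - x) * Ring.inverse b := by
  rw [sub_mul, mul_assoc, Ring.mul_inverse_cancel b hb, mul_one]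

lemma Ring.isUnit_mul_inverse_iff (hb : IsUnit b) (x : R) :
    IsUnit (x * Ring.inverse b) ↔ IsUnit x := by
  obtain ⟨u, rfl⟩ := hb
  rw [Ring.inverse_unit, Units.isUnit_mul_units]

end

section
variable {𝕜 A : Type*} [Field 𝕜] [Ring A] [Algebra 𝕜 A]

noncomputable def mobius (p q : 𝕜) (a : A) : A :=
  (a - algebraMap 𝕜 A p) * Ring.inverse (a - algebraMap 𝕜 A q)

namespace spectrum

variable {p q : 𝕜} {a : A}

lemma isUnit_sub_algebraMap_of_notMem (hq : q ∉ spectrum 𝕜 a) :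
    IsUnit (a - algebraMap 𝕜 A q) := by
  simpa using (notMem_iff.mp hq).neg

lemma one_notMem_mobius (hpq : p ≠ q) (hq : q ∉ spectrum 𝕜 a) :
    1 ∉ spectrum 𝕜 (mobius p q a) := by
  have hb := isUnit_sub_algebraMap_of_notMem hq
  rw [notMem_iff, mobius, Ring.sub_mul_inverse_eq hb, map_one, one_mul,
    sub_sub_sub_cancel_left, ← map_sub, Ring.isUnit_mul_inverse_iff hb]
  exact (isUnit_iff_ne_zero.mpr (sub_ne_zero.mpr hpq)).map _

lemma mobius_mem_iff (hpq : p ≠ q) (hq : q ∉ spectrum 𝕜 a) {z : 𝕜} (hz : z ≠ q) :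
    (z - p) / (z - q) ∈ spectrum 𝕜 (mobius p q a) ↔ z ∈ spectrum 𝕜 a := by
  have hb := isUnit_sub_algebraMap_of_notMem hq
  have hzq : z - q ≠ 0 := sub_ne_zero.mpr hz
  have key : algebraMap 𝕜 A ((z - p) / (z - q)) * (a - algebraMap 𝕜 A q) - (a - algebraMap 𝕜 A p)
      = ((p - q) / (z - q)) • (algebraMap 𝕜 A z - a) := by
    simp only [Algebra.algebraMap_eq_smul_one, smul_one_mul]
    match_scalars <;> field_simp <;> ring
  have hc : (p - q) / (z - q) ≠ 0 := div_ne_zero (sub_ne_zero.mpr hpq) hzq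
  rw [mem_iff, mem_iff, mobius, Ring.sub_mul_inverse_eq hb, key, smul_mul_assoc,
    ← Units.smul_mk0 hc, isUnit_smul_iff, Ring.isUnit_mul_inverse_iff hb]

theorem mobius_eq_image (hpq : p ≠ q) (hq : q ∉ spectrum 𝕜 a) :
    spectrum 𝕜 (mobius p q a) = (fun z ↦ (z - p) / (z - q)) '' spectrum 𝕜 a := by
  ext l
  constructor
  · intro hl
    have hl1 : 1 - l ≠ 0 := sub_ne_zero.mpr fun h ↦ one_notMem_mobius hpq hq (h ▸ hl)
    set z := (p - l * q) / (1 - l)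
    have hzq : z - q = (p - q) / (1 - l) := by simp only [z]; field_simp; ring
    have hz : z ≠ q := sub_ne_zero.mp (hzq ▸ div_ne_zero (sub_ne_zero.mpr hpq) hl1)
    have hlz : (z - p) / (z - q) = l := by
      rw [hzq]; simp only [z]; field_simp; ring
    exact ⟨z, (mobius_mem_iff hpq hq hz).mp (hlz ▸ hl), hlz⟩
  · rintro ⟨z, hz, rfl⟩
    exact (mobius_mem_iff hpq hq (ne_of_mem_of_not_mem hz hq)).mpr hz

end spectrum
end

lemma Complex.norm_sub_I_div_add_I_eq_one_iff {z : ℂ} (hz : z ≠ -I) :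
    ‖(z - I) / (z + I)‖ = 1 ↔ z.im = 0 := by
  have hz' : ‖z + I‖ ≠ 0 := norm_ne_zero_iff.mpr fun h ↦ hz (eq_neg_of_add_eq_zero_left h)
  rw [norm_div, div_eq_one_iff_eq hz', ← sq_eq_sq₀ (norm_nonneg _) (norm_nonneg _),
    Complex.sq_norm, Complex.sq_norm, Complex.normSq_apply, Complex.normSq_apply]
  simp only [sub_re, sub_im, add_re, add_im, I_re, I_im]
  constructor <;> intro h <;> nlinarith

theorem stmt11_general {A : Type*} [Ring A] [Algebra ℂ A]
    (a : A) (hmi : -Complex.I ∉ spectrum ℂ a)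
    (g : A) (hg : g = (a - algebraMap ℂ A Complex.I) * Ring.inverse (a + algebraMap ℂ A Complex.I)) :
    (∀ z ∈ spectrum ℂ a, z.im = 0) ↔ (∀ z ∈ spectrum ℂ g, ‖z‖ = 1) := by
  have hg' : g = mobius Complex.I (-Complex.I) a := by
    rw [hg, mobius, map_neg, sub_neg_eq_add]
  have hI : Complex.I ≠ -Complex.I := by norm_num [Complex.ext_iff]
  rw [hg', spectrum.mobius_eq_image hI hmi, Set.forall_mem_image]
  refine forall₂_congr fun z hz ↦ ?_
  rw [sub_neg_eq_add, Complex.norm_sub_I_div_add_I_eq_one_iff (ne_of_mem_of_not_mem hz hmi)]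

/-- For `a` with `±i ∉ spectrum ℂ a` and Cayley transform
`g = (a - i·1) * (a + i·1)⁻¹`, the spectrum of `a` is real iff the spectrum of `g` lies in the
unit circle. -/
theorem stmt11 {A : Type*} [Ring A] [Algebra ℂ A]
    (a : A) (hi : Complex.I ∉ spectrum ℂ a) (hmi : -Complex.I ∉ spectrum ℂ a)
    (g : A) (hg : g = (a - algebraMap ℂ A Complex.I) * Ring.inverse (a + algebraMap ℂ A Complex.I)) :
    (∀ z ∈ spectrum ℂ a, z.im = 0) ↔ (∀ z ∈ spectrum ℂ g, ‖z‖ = 1) :=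
  stmt11_general a hmi g hg
end

section
/- Let A be a Hermitian unital complex *-algebra. If two unital algebra homomorphisms φ, ψ : A →ₐ[ℂ] ℂ agree on all unitary elements of A (φ(g) = ψ(g) for every g ∈ unitary A), then φ = ψ. -/
/-- Two multiplicative linear functionals on a Hermitian unital complex
*-algebra agreeing on all unitary elements are equal. -/
theorem stmt13 {A : Type*} [Ring A] [Algebra ℂ A] [StarRing A] [StarModule ℂ A]
    (hHerm : ∀ a : A, star a = a → ∀ z ∈ spectrum ℂ a, z.im = 0)
    (φ ψ : A →ₐ[ℂ] ℂ)
    (h : ∀ g ∈ unitary A, φ g = ψ g) :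
    φ = ψ := by
  have key : ∀ a : A, star a = a → φ a = ψ a := by
    intro a ha
    have hφre : (φ a).im = 0 := hHerm a ha _ (AlgHom.apply_mem_spectrum φ a)
    have hψre : (ψ a).im = 0 := hHerm a ha _ (AlgHom.apply_mem_spectrum ψ a)
    set c : A := algebraMap ℂ A Complex.I with hc
    have hsc : star c = -c := by
      rw [hc, ← algebraMap_star_comm, Complex.star_def, Complex.conj_I, map_neg]
    -- b = a + i is invertible
    have hnm : (-Complex.I) ∉ spectrum ℂ a := by
      intro hm
      have := hHerm a ha _ hm
      simp at this
    rw [spectrum.notMem_iff] at hnm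
    have hb : IsUnit (a + c) := by
      have he : algebraMap ℂ A (-Complex.I) - a = -(a + c) := by
        rw [map_neg, ← hc]; abel
      rw [he] at hnm
      exact (IsUnit.neg_iff _).mp hnm
    obtain ⟨B, hB⟩ := hb
    set v : A := ↑B⁻¹ with hvdef
    have hv1 : (a + c) * v = 1 := by rw [← hB, hvdef]; exact B.mul_inv
    have hv2 : v * (a + c) = 1 := by rw [← hB, hvdef]; exact B.inv_mul
    have hsb : star (a + c) = a - c := by
      rw [star_add, ha, hsc, sub_eq_add_neg]
    have hca : c * a = a * c := Algebra.commutes Complex.I a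
    have hcomm : (a + c) * (a - c) = (a - c) * (a + c) := by
      calc (a + c) * (a - c) = a * a + c * a - a * c - c * c := by noncomm_ring
        _ = a * a + a * c - c * a - c * c := by rw [hca]
        _ = (a - c) * (a + c) := by noncomm_ring
    have hw1 : (a - c) * star v = 1 := by
      rw [← hsb, ← star_mul, hv2, star_one]
    have hw2 : star v * (a - c) = 1 := by
      rw [← hsb, ← star_mul, hv1, star_one]
    set u : A := (a - c) * v with hu
    have hvcomm : (a - c) * v = v * (a - c) := by
      calc (a - c) * v = (v * (a + c)) * ((a - c) * v) := by rw [hv2, one_mul]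
        _ = v * (((a + c) * (a - c)) * v) := by noncomm_ring
        _ = v * (((a - c) * (a + c)) * v) := by rw [hcomm]
        _ = v * ((a - c) * ((a + c) * v)) := by noncomm_ring
        _ = v * (a - c) := by rw [hv1, mul_one]
    have hustar : star u = star v * (a + c) := by
      rw [hu, star_mul]
      congr 1
      rw [← hsb, star_star]
    have humem : u ∈ unitary A := by
      constructor
      · rw [hustar, hu]
        calc star v * (a + c) * ((a - c) * v)
            = star v * ((a + c) * (a - c)) * v := by noncomm_ring
          _ = star v * ((a - c) * (a + c)) * v := by rw [hcomm]
          _ = (star v * (a - c)) * ((a + c) * v) := by noncomm_ring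
          _ = 1 := by rw [hw2, hv1, one_mul]
      · rw [hustar, hu]
        calc (a - c) * v * (star v * (a + c))
            = v * (a - c) * (star v * (a + c)) := by rw [hvcomm]
          _ = v * (((a - c) * star v) * (a + c)) := by noncomm_ring
          _ = v * (a + c) := by rw [hw1, one_mul]
          _ = 1 := hv2
    have hφψ := h u humem
    -- evaluate characters
    have hφc : φ c = Complex.I := by rw [hc]; exact φ.commutes Complex.I
    have hψc : ψ c = Complex.I := by rw [hc]; exact ψ.commutes Complex.I
    have hφv : (φ a + Complex.I) * φ v = 1 := by
      have := congrArg φ hv1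
      rwa [map_mul, map_add, hφc, map_one] at this
    have hψv : (ψ a + Complex.I) * ψ v = 1 := by
      have := congrArg ψ hv1
      rwa [map_mul, map_add, hψc, map_one] at this
    have hφne : φ a + Complex.I ≠ 0 := by
      intro h0
      have h1 : (φ a + Complex.I).im = 1 := by simp [hφre]
      rw [h0] at h1; simp at h1
    have hψne : ψ a + Complex.I ≠ 0 := by
      intro h0
      have h1 : (ψ a + Complex.I).im = 1 := by simp [hψre]
      rw [h0] at h1; simp at h1
    have hφvi : φ v = (φ a + Complex.I)⁻¹ := by
      field_simp
      linear_combination hφv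
    have hψvi : ψ v = (ψ a + Complex.I)⁻¹ := by
      field_simp
      linear_combination hψv
    have hφu : φ u = (φ a - Complex.I) * (φ a + Complex.I)⁻¹ := by
      rw [hu, map_mul, map_sub, hφc, hφvi]
    have hψu : ψ u = (ψ a - Complex.I) * (ψ a + Complex.I)⁻¹ := by
      rw [hu, map_mul, map_sub, hψc, hψvi]
    rw [hφu, hψu] at hφψ
    field_simp at hφψ
    have h2 : (2 * Complex.I) * φ a = (2 * Complex.I) * ψ a := by
      linear_combination hφψ
    have h2I : (2 * Complex.I) ≠ 0 := by simp [Complex.I_ne_zero]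
    exact mul_left_cancel₀ h2I h2
  -- decompose a general element
  ext a
  have hs : star (((1:ℂ)/2) • (a + star a)) = ((1:ℂ)/2) • (a + star a) := by
    rw [star_smul, star_add, star_star]
    simp [add_comm]
  have ht : star ((-(Complex.I)/2) • (a - star a)) = (-(Complex.I)/2) • (a - star a) := by
    rw [star_smul, star_sub, star_star, ← neg_sub a (star a), smul_neg, ← neg_smul]
    congr 1
    simp [Complex.ext_iff]
    norm_num
  have hdecomp : a = ((1:ℂ)/2) • (a + star a)
      + Complex.I • ((-(Complex.I)/2) • (a - star a)) := by
    rw [smul_smul,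
      show Complex.I * (-(Complex.I)/2) = (1:ℂ)/2 by
        linear_combination (-1/2 : ℂ) * Complex.I_mul_I]
    module
  calc φ a = φ (((1:ℂ)/2) • (a + star a)) + Complex.I * φ ((-(Complex.I)/2) • (a - star a)) := by
        conv_lhs => rw [hdecomp]
        rw [map_add, map_smul]
        simp
    _ = ψ (((1:ℂ)/2) • (a + star a)) + Complex.I * ψ ((-(Complex.I)/2) • (a - star a)) := by
        rw [key _ hs, key _ ht]
    _ = ψ a := by
        conv_rhs => rw [hdecomp]
        rw [map_add, map_smul]
        simp
end

section
/- Let A be a Hermitian unital complex *-algebra. Then every selfadjoint element a ∈ A is the inverse Cayley transform of a unitary element: there exists g ∈ unitary A such that 1 - g is invertible in A and a = i · (1 - g)⁻¹ * (1 + g). -/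
/-!
For selfadjoint `a` in a Hermitian algebra, `-i` is not in the spectrum, so `u = a + i` is
invertible; `star u = a - i` commutes with `u`, hence `g = star u * u⁻¹ = (a - i)(a + i)⁻¹` is
unitary. From `g (a + i) = a - i` one gets `(1 - g)(a + i) = 2i`, so `1 - g` is invertible, and
`(1 - g) a = i (1 + g)`, which is the inverse Cayley formula because `i` is central.
-/

open Complex

section Algebra

variable {A : Type*} [Ring A] [Algebra ℂ A] {a : A}

/-- `Ring.inverse` is `0` off the units, so `cayley a` is only meaningful when `a + i` is
invertible. -/
noncomputable def cayley (a : A) : A :=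
  (a - algebraMap ℂ A I) * Ring.inverse (a + algebraMap ℂ A I)

noncomputable def inverseCayley (g : A) : A :=
  algebraMap ℂ A I * Ring.inverse (1 - g) * (1 + g)

lemma isUnit_add_algebraMap_I (ha : ∀ z ∈ spectrum ℂ a, z.im = 0) :
    IsUnit (a + algebraMap ℂ A I) := by
  have hI : -I ∉ spectrum ℂ a := fun h => by simpa using ha _ h
  rwa [spectrum.notMem_iff, map_neg, ← neg_add', IsUnit.neg_iff, add_comm] at hI

lemma cayley_mul_add_algebraMap_I (hu : IsUnit (a + algebraMap ℂ A I)) :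
    cayley a * (a + algebraMap ℂ A I) = a - algebraMap ℂ A I :=
  Ring.inverse_mul_cancel_right _ _ hu

lemma one_sub_cayley_mul_add_algebraMap_I (hu : IsUnit (a + algebraMap ℂ A I)) :
    (1 - cayley a) * (a + algebraMap ℂ A I) = algebraMap ℂ A (2 * I) := by
  rw [sub_mul, one_mul, cayley_mul_add_algebraMap_I hu, map_mul, map_ofNat, two_mul]
  abel

lemma isUnit_one_sub_cayley (hu : IsUnit (a + algebraMap ℂ A I)) : IsUnit (1 - cayley a) := by
  rw [← hu.mul_right_iff, one_sub_cayley_mul_add_algebraMap_I hu]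
  exact (isUnit_iff_ne_zero.mpr (by simp)).map _

lemma one_sub_cayley_mul (hu : IsUnit (a + algebraMap ℂ A I)) :
    (1 - cayley a) * a = algebraMap ℂ A I * (1 + cayley a) := by
  have h := cayley_mul_add_algebraMap_I hu
  rw [mul_add] at h
  rw [sub_mul, one_mul, mul_add, mul_one, Algebra.commutes, eq_sub_of_add_eq' h]
  abel

lemma inverseCayley_cayley (hu : IsUnit (a + algebraMap ℂ A I)) :
    inverseCayley (cayley a) = a := by
  rw [inverseCayley, Algebra.commutes, mul_assoc, ← one_sub_cayley_mul hu,
    Ring.inverse_mul_cancel_left _ _ (isUnit_one_sub_cayley hu)]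

end Algebra

section StarAlgebra

variable {A : Type*} [Ring A] [Algebra ℂ A] [StarRing A] [StarModule ℂ A] {a : A}

lemma star_add_algebraMap_I (ha : IsSelfAdjoint a) :
    star (a + algebraMap ℂ A I) = a - algebraMap ℂ A I := by
  rw [star_add, ha.star_eq, ← algebraMap_star_comm, star_def, conj_I, map_neg, sub_eq_add_neg]

lemma cayley_mem_unitary (ha : IsSelfAdjoint a) (hu : IsUnit (a + algebraMap ℂ A I)) :
    cayley a ∈ unitary A := by
  obtain ⟨u, hu⟩ := hu
  have hcomm : Commute (a - algebraMap ℂ A I) (a + algebraMap ℂ A I) :=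
    ((Commute.refl a).sub_left (Algebra.commute_algebraMap_left I a)).add_right
      (Algebra.commute_algebraMap_right I _)
  have hstar : star (u : A) = a - algebraMap ℂ A I := hu ▸ star_add_algebraMap_I ha
  rw [cayley, ← hu, Ring.inverse_unit, ← hstar, ← Units.coe_star, Units.mul_inv_mem_unitary]
  ext
  simp only [Units.val_mul, Units.coe_star, star_star, hstar]
  rw [hu, hcomm.eq]

end StarAlgebra

/-- In a Hermitian unital complex *-algebra, every selfadjoint element is the
inverse Cayley transform of a unitary element. -/
theorem stmt14 {A : Type*} [Ring A] [Algebra ℂ A] [StarRing A] [StarModule ℂ A]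
    (hHerm : ∀ a : A, star a = a → ∀ z ∈ spectrum ℂ a, z.im = 0)
    (a : A) (hsa : star a = a) :
    ∃ g ∈ unitary A, IsUnit (1 - g) ∧
      a = algebraMap ℂ A Complex.I * Ring.inverse (1 - g) * (1 + g) := by
  have hu := isUnit_add_algebraMap_I (hHerm a hsa)
  exact ⟨cayley a, cayley_mem_unitary hsa hu, isUnit_one_sub_cayley hu,
    (inverseCayley_cayley hu).symm⟩
end
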